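/- arXiv:2010.01732 — 8 statements merged into one kernel-verified Lean document; each statement's English description precedes it below -/
import Mathlib

section
/- Let σ: ℝ → ℝ be slope-restricted in [0,1], W ∈ ℝⁿˣⁿ, and Λ a positive diagonal matrix such that 2Λ - ΛW - WᵀΛ is positive definite. Then for any fixed c ∈ ℝⁿ, the equation z = σ(Wz + c) (σ elementwise) has at most one solution z ∈ ℝⁿ. -/
open Matrix

/-!
For two equilibria put `e = z₁ - z₂`. Coordinatewise, `e i` is the increment of `σ` over an
increment `(W e) i` of its argument, so the slope condition gives `e i * ((W e) i - e i) ≥ 0`.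
Weighting by `d i > 0` and summing, the quadratic form of `2Λ - ΛW - WᵀΛ` at `e` equals
`-2 ∑ d i e i ((W e) i - e i) ≤ 0`, which positive definiteness allows only for `e = 0`.
-/

lemma mul_sub_sub_nonneg_of_slope_mem_unitInterval {σ : ℝ → ℝ}
    (hσ : ∀ x y : ℝ, x ≠ y →
      0 ≤ (σ x - σ y) / (x - y) ∧ (σ x - σ y) / (x - y) ≤ 1) (x y : ℝ) :
    0 ≤ (σ x - σ y) * ((x - y) - (σ x - σ y)) := by
  rcases eq_or_ne x y with rfl | hxy
  · simp
  obtain ⟨h0, h1⟩ := hσ x y hxy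
  set s := (σ x - σ y) / (x - y)
  have hs : σ x - σ y = s * (x - y) := (div_mul_cancel₀ _ (sub_ne_zero.mpr hxy)).symm
  rw [hs]
  have hsq : 0 ≤ s * (1 - s) * (x - y) ^ 2 := by
    have := sub_nonneg.mpr h1
    positivity
  linarith

lemma dotProduct_two_diagonal_sub_mulVec {ι R : Type*} [Fintype ι] [DecidableEq ι] [CommRing R]
    (d : ι → R) (W : Matrix ι ι R) (e : ι → R) :
    e ⬝ᵥ (((2 : R) • diagonal d - diagonal d * W - Wᵀ * diagonal d) *ᵥ e) =
      -2 * ∑ i, d i * (e i * ((W *ᵥ e) i - e i)) := by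
  rw [sub_mulVec, sub_mulVec, smul_mulVec, ← mulVec_mulVec, ← mulVec_mulVec, dotProduct_sub,
    dotProduct_sub, dotProduct_mulVec e Wᵀ, vecMul_transpose]
  simp only [mulVec_diagonal, dotProduct, Pi.smul_apply, smul_eq_mul, Finset.mul_sum,
    ← Finset.sum_sub_distrib]
  refine Finset.sum_congr rfl fun i _ => ?_
  ring

lemma eq_zero_of_posDef_of_forall_mul_sub_nonneg {ι : Type*} [Fintype ι] [DecidableEq ι]
    {d : ι → ℝ} (hd : ∀ i, 0 ≤ d i) {W : Matrix ι ι ℝ}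
    (hW : ((2 : ℝ) • diagonal d - diagonal d * W - Wᵀ * diagonal d).PosDef)
    {e : ι → ℝ} (he : ∀ i, 0 ≤ e i * ((W *ᵥ e) i - e i)) : e = 0 := by
  by_contra hne
  have hpos := hW.dotProduct_mulVec_pos hne
  have hsum : 0 ≤ ∑ i, d i * (e i * ((W *ᵥ e) i - e i)) :=
    Finset.sum_nonneg fun i _ => mul_nonneg (hd i) (he i)
  rw [star_trivial, dotProduct_two_diagonal_sub_mulVec] at hpos
  linarith

/-- Uniqueness of equilibria: if `σ` is slope-restricted in `[0,1]` and
`2Λ - ΛW - WᵀΛ ≻ 0` for some positive diagonal `Λ`, then for each fixed `c`,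
the equation `z = σ(Wz + c)` has at most one solution. -/
theorem equilibrium_unique
    {n : ℕ} (σ : ℝ → ℝ)
    (hσ : ∀ x y : ℝ, x ≠ y →
      0 ≤ (σ x - σ y) / (x - y) ∧ (σ x - σ y) / (x - y) ≤ 1)
    (W : Matrix (Fin n) (Fin n) ℝ) (d : Fin n → ℝ) (hd : ∀ i, 0 < d i)
    (hW : ((2 : ℝ) • Matrix.diagonal d - Matrix.diagonal d * W -
        Wᵀ * Matrix.diagonal d).PosDef)
    (c : Fin n → ℝ) (z₁ z₂ : Fin n → ℝ)
    (h₁ : z₁ = fun i => σ ((W.mulVec z₁ + c) i))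
    (h₂ : z₂ = fun i => σ ((W.mulVec z₂ + c) i)) :
    z₁ = z₂ := by
  refine sub_eq_zero.mp (eq_zero_of_posDef_of_forall_mul_sub_nonneg (fun i => (hd i).le) hW fun i => ?_)
  have hz : (z₁ - z₂) i = σ ((W *ᵥ z₁ + c) i) - σ ((W *ᵥ z₂ + c) i) := by
    conv_lhs => rw [h₁, h₂]
    rfl
  have hWz : (W *ᵥ (z₁ - z₂)) i = (W *ᵥ z₁ + c) i - (W *ᵥ z₂ + c) i := by
    simp [mulVec_sub]
  rw [hz, hWz]
  exact mul_sub_sub_nonneg_of_slope_mem_unitInterval hσ _ _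
end

section
/- Direct parameterization of the well-posedness condition: a matrix W ∈ ℝⁿˣⁿ satisfies 2Λ - ΛW - WᵀΛ ≽ 2εΛΨΛ ≻ 0 for the positive diagonal matrix Λ = Ψ⁻¹ if and only if W = I - Ψ(VᵀV + εI + S) for some V ∈ ℝⁿˣⁿ, skew-symmetric S, positive diagonal Ψ, and ε > 0. In particular, for any V, skew-symmetric S, positive diagonal Ψ and ε > 0, the matrix W = I - Ψ(VᵀV + εI + S) satisfies 2Ψ⁻¹ - Ψ⁻¹W - WᵀΨ⁻¹ ≻ 0. -/
/-!
With `ΛΨ = 1` and `Λ` symmetric, the substitution `T = Λ(1 - W)`, `W = 1 - ΨT` turns the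
well-posedness form `2Λ - ΛW - WᵀΛ` into `T + Tᵀ`, and `ΛΨΛ = Λ`. A positive diagonal matrix lies
between two positive multiples of the identity, so `T + Tᵀ ≽ 2εΛ` for some `ε > 0` iff
`T + Tᵀ ≽ 2εI` for some `ε > 0`. The latter says exactly that `T = VᵀV + εI + S` with `S` skew:
factor `(T + Tᵀ)/2 - εI = VᵀV` and let `S` be the remainder. The strict inequality for
`W = 1 - Ψ(VᵀV + εI + S)` is the sum of the semidefinite and the definite part.
-/

open Matrix

lemma exists_pos_forall_mul_le {ι : Type*} [Finite ι] {d e : ι → ℝ} (hd : ∀ i, 0 < d i)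
    (he : ∀ i, 0 < e i) : ∃ c, 0 < c ∧ ∀ i, c * e i ≤ d i := by
  cases isEmpty_or_nonempty ι
  · exact ⟨1, one_pos, isEmptyElim⟩
  · obtain ⟨j, hj⟩ := Finite.exists_min fun i => d i / e i
    exact ⟨d j / e j, div_pos (hd j) (he j), fun i => (le_div_iff₀ (he i)).mp (hj i)⟩

lemma eq_one_sub_mul_iff_mul_one_sub_eq {α : Type*} [Ring α] {Λ Ψ : α} (hΛΨ : Λ * Ψ = 1)
    (hΨΛ : Ψ * Λ = 1) {W X : α} : W = 1 - Ψ * X ↔ Λ * (1 - W) = X := by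
  constructor
  · rintro rfl
    rw [sub_sub_cancel, ← mul_assoc, hΛΨ, one_mul]
  · rintro rfl
    rw [← mul_assoc, hΨΛ, one_mul, sub_sub_cancel]

namespace Matrix

variable {m : Type*}

lemma IsSymm.add_skew_add_transpose {R : Type*} [Ring R] {A S : Matrix m m R}
    (hA : A.IsSymm) (hS : S = -Sᵀ) : A + S + (A + S)ᵀ = (2 : R) • A := by
  rw [transpose_add, hA.eq, two_smul, add_add_add_comm, eq_neg_iff_add_eq_zero.mp hS, add_zero]

lemma PosSemidef.sub_smul_of_posSemidef_sub_smul {M A B : Matrix m m ℝ} {a b : ℝ}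
    (hM : (M - a • A).PosSemidef) (hA : (A - b • B).PosSemidef) (ha : 0 ≤ a) :
    (M - (a * b) • B).PosSemidef := by
  have : M - (a * b) • B = (M - a • A) + a • (A - b • B) := by
    rw [smul_sub, mul_smul]
    abel
  rw [this]
  exact hM.add (hA.smul ha)

variable [Fintype m]

open scoped ComplexOrder in
lemma PosSemidef.exists_eq_conjTranspose_mul_self {𝕜 : Type*} [RCLike 𝕜] {A : Matrix m m 𝕜}
    (hA : A.PosSemidef) : ∃ V : Matrix m m 𝕜, A = Vᴴ * V := by
  classical
  open scoped MatrixOrder Matrix.Norms.L2Operator in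
  obtain ⟨V, hV⟩ := CStarAlgebra.nonneg_iff_eq_star_mul_self.mp hA.nonneg
  exact ⟨V, hV⟩

variable [DecidableEq m]

lemma mul_one_sub_add_transpose {R : Type*} [CommRing R] {Λ : Matrix m m R}
    (hΛ : Λ.IsSymm) (W : Matrix m m R) :
    Λ * (1 - W) + (Λ * (1 - W))ᵀ = (2 : R) • Λ - Λ * W - Wᵀ * Λ := by
  rw [transpose_mul, hΛ.eq, transpose_sub, transpose_one, mul_sub, sub_mul, mul_one, one_mul,
    two_smul]
  abel

lemma exists_pos_posSemidef_sub_smul_diagonal {M : Matrix m m ℝ} {d e : m → ℝ}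
    (hd : ∀ i, 0 < d i) (he : ∀ i, 0 < e i) {ε : ℝ} (hε : 0 < ε)
    (hM : (M - (2 * ε) • diagonal d).PosSemidef) :
    ∃ ε' : ℝ, 0 < ε' ∧ (M - (2 * ε') • diagonal e).PosSemidef := by
  obtain ⟨c, hc, hce⟩ := exists_pos_forall_mul_le hd he
  have hde : (diagonal d - c • diagonal e).PosSemidef := by
    rw [← diagonal_smul, diagonal_sub, posSemidef_diagonal_iff]
    exact fun i => sub_nonneg.mpr (hce i)
  refine ⟨ε * c, mul_pos hε hc, ?_⟩
  rw [← mul_assoc]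
  exact hM.sub_smul_of_posSemidef_sub_smul hde (by positivity)

lemma exists_pos_posSemidef_sub_smul_diagonal_iff {M : Matrix m m ℝ} {d e : m → ℝ}
    (hd : ∀ i, 0 < d i) (he : ∀ i, 0 < e i) :
    (∃ ε : ℝ, 0 < ε ∧ (M - (2 * ε) • diagonal d).PosSemidef) ↔
      ∃ ε : ℝ, 0 < ε ∧ (M - (2 * ε) • diagonal e).PosSemidef :=
  ⟨fun ⟨_, hε, hM⟩ => exists_pos_posSemidef_sub_smul_diagonal hd he hε hM,
    fun ⟨_, hε, hM⟩ => exists_pos_posSemidef_sub_smul_diagonal he hd hε hM⟩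

theorem exists_posSemidef_add_transpose_sub_smul_one_iff {T : Matrix m m ℝ} :
    (∃ ε : ℝ, 0 < ε ∧ (T + Tᵀ - (2 * ε) • (1 : Matrix m m ℝ)).PosSemidef) ↔
      ∃ (V S : Matrix m m ℝ) (ε : ℝ), 0 < ε ∧ S = -Sᵀ ∧ T = Vᵀ * V + ε • 1 + S := by
  constructor
  · rintro ⟨ε, hε, hT⟩
    obtain ⟨V, hV⟩ :=
      (hT.smul (inv_nonneg.mpr zero_le_two : (0 : ℝ) ≤ 2⁻¹)).exists_eq_conjTranspose_mul_self
    rw [conjTranspose_eq_transpose_of_trivial] at hV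
    refine ⟨V, T - Vᵀ * V - ε • 1, ε, hε, ?_, by abel⟩
    rw [eq_neg_iff_add_eq_zero, transpose_sub, transpose_sub, transpose_mul, transpose_transpose,
      transpose_smul, transpose_one, ← hV]
    module
  · rintro ⟨V, S, ε, hε, hS, rfl⟩
    have hsymm : (Vᵀ * V + ε • (1 : Matrix m m ℝ)).IsSymm :=
      (isSymm_transpose_mul_self V).add (isSymm_one.smul ε)
    refine ⟨ε, hε, ?_⟩
    rw [hsymm.add_skew_add_transpose hS, smul_add, smul_smul, add_sub_cancel_right]
    refine PosSemidef.smul ?_ zero_le_two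
    simpa only [conjTranspose_eq_transpose_of_trivial] using posSemidef_conjTranspose_mul_self V

theorem wellPosed_iff_exists_eq_one_sub_mul {d : m → ℝ} (hd : ∀ i, 0 < d i)
    {Λ Ψ : Matrix m m ℝ} (hΛ : Λ = diagonal d) (hΛΨ : Λ * Ψ = 1) (W : Matrix m m ℝ) :
    (∃ ε : ℝ, 0 < ε ∧
        ((2 : ℝ) • Λ - Λ * W - Wᵀ * Λ - ((2 * ε) • (Λ * Ψ * Λ))).PosSemidef ∧
        ((2 * ε) • (Λ * Ψ * Λ)).PosDef) ↔
      ∃ (V S : Matrix m m ℝ) (ε : ℝ), 0 < ε ∧ S = -Sᵀ ∧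
        W = 1 - Ψ * (Vᵀ * V + ε • (1 : Matrix m m ℝ) + S) := by
  have hΛpos (ε : ℝ) (hε : 0 < ε) : ((2 * ε) • Λ).PosDef :=
    (hΛ ▸ posDef_diagonal_iff.mpr hd).smul (by positivity)
  have hΛ_iff_one := exists_pos_posSemidef_sub_smul_diagonal_iff
    (M := Λ * (1 - W) + (Λ * (1 - W))ᵀ) hd fun _ => one_pos
  rw [diagonal_one, ← hΛ] at hΛ_iff_one
  simp_rw [hΛΨ, one_mul, ← mul_one_sub_add_transpose (hΛ ▸ isSymm_diagonal d),
    eq_one_sub_mul_iff_mul_one_sub_eq hΛΨ (mul_eq_one_comm.mp hΛΨ),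
    ← exists_posSemidef_add_transpose_sub_smul_one_iff, ← hΛ_iff_one]
  exact exists_congr fun ε => and_congr_right fun hε => and_iff_left (hΛpos ε hε)

end Matrix

/-- Direct parameterization of the well-posedness condition. With `Λ = Ψ⁻¹`
(`Ψ` positive diagonal): `W` satisfies `2Λ - ΛW - WᵀΛ ≽ 2εΛΨΛ ≻ 0` for some
`ε > 0` iff `W = I - Ψ(VᵀV + εI + S)` for some `V`, skew-symmetric `S` and
`ε > 0`.  In particular any such `W` satisfies `2Ψ⁻¹ - Ψ⁻¹W - WᵀΨ⁻¹ ≻ 0`. -/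
theorem direct_parameterization_wellposed
    {n : ℕ} (ψ : Fin n → ℝ) (hψ : ∀ i, 0 < ψ i)
    (Ψ : Matrix (Fin n) (Fin n) ℝ) (hΨ : Ψ = Matrix.diagonal ψ)
    (Λ : Matrix (Fin n) (Fin n) ℝ) (hΛ : Λ = Matrix.diagonal fun i => (ψ i)⁻¹) :
    (∀ W : Matrix (Fin n) (Fin n) ℝ,
      ((∃ ε : ℝ, 0 < ε ∧
          ((2 : ℝ) • Λ - Λ * W - Wᵀ * Λ - ((2 * ε) • (Λ * Ψ * Λ))).PosSemidef ∧
          ((2 * ε) • (Λ * Ψ * Λ)).PosDef) ↔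
        (∃ (V S : Matrix (Fin n) (Fin n) ℝ) (ε : ℝ), 0 < ε ∧ S = -Sᵀ ∧
          W = 1 - Ψ * (Vᵀ * V + ε • (1 : Matrix (Fin n) (Fin n) ℝ) + S)))) ∧
    (∀ (V S : Matrix (Fin n) (Fin n) ℝ) (ε : ℝ), 0 < ε → S = -Sᵀ →
      ((2 : ℝ) • Λ - Λ * (1 - Ψ * (Vᵀ * V + ε • (1 : Matrix (Fin n) (Fin n) ℝ) + S)) -
        (1 - Ψ * (Vᵀ * V + ε • (1 : Matrix (Fin n) (Fin n) ℝ) + S))ᵀ * Λ).PosDef) := by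
  have hΛΨ : Λ * Ψ = 1 := by
    rw [hΛ, hΨ, diagonal_mul_diagonal, ← diagonal_one]
    exact congrArg diagonal (funext fun i => inv_mul_cancel₀ (hψ i).ne')
  have wellPosed_iff := wellPosed_iff_exists_eq_one_sub_mul (fun i => inv_pos.mpr (hψ i)) hΛ hΛΨ
  refine ⟨wellPosed_iff, fun V S ε hε hS => ?_⟩
  obtain ⟨ε', -, hM, hP⟩ := (wellPosed_iff _).mpr ⟨V, S, ε, hε, hS, rfl⟩
  simpa only [sub_add_cancel] using PosDef.posSemidef_add hM hP
end

section
/- For any free matrices V ∈ ℝⁿˣⁿ, U ∈ ℝⁿˣᵈ, W_o ∈ ℝᵖˣⁿ, skew-symmetric S ∈ ℝⁿˣⁿ, positive diagonal Ψ ∈ ℝⁿˣⁿ, and scalars γ > 0, ε > 0, the matrix W = I - Ψ((1/(2γ))W_oᵀW_o + (1/(2γ))Ψ⁻¹UUᵀΨ⁻¹ + VᵀV + εI + S) satisfies 2Λ - ΛW - WᵀΛ - (1/γ)W_oᵀW_o - (1/γ)ΛUUᵀΛ ≻ 0 with Λ = Ψ⁻¹. -/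
/-!
Because `ΛΨ = 1`, the expression `2Λ - ΛW - WᵀΛ` with `W = 1 - ΨM` is just `M + Mᵀ`. In `M + Mᵀ`
the skew part `S` cancels and the two `1/(2γ)` terms double to exactly the `1/γ` terms that are
subtracted, leaving `2 (VᵀV + εI)`, which is positive definite.
-/

open Matrix

variable {ι m R : Type*} [Fintype ι] [DecidableEq ι]

theorem Matrix.diagonal_inv_mul_diagonal [DivisionRing R] {d : ι → R} (hd : ∀ i, d i ≠ 0) :
    diagonal (fun i => (d i)⁻¹) * diagonal d = 1 := by
  rw [diagonal_mul_diagonal, ← diagonal_one]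
  exact congrArg diagonal (funext fun i => inv_mul_cancel₀ (hd i))

theorem Matrix.two_smul_sub_mul_one_sub_mul_sub_transpose [CommRing R] {Λ Ψ : Matrix ι ι R}
    (M : Matrix ι ι R) (hΛΨ : Λ * Ψ = 1) (hΨ : Ψᵀ = Ψ) :
    (2 : R) • Λ - Λ * (1 - Ψ * M) - (1 - Ψ * M)ᵀ * Λ = M + Mᵀ := by
  have hΨΛ : Ψ * Λ = 1 := mul_eq_one_comm.mp hΛΨ
  rw [transpose_sub, transpose_one, transpose_mul, hΨ, mul_sub, sub_mul, ← Matrix.mul_assoc,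
    Matrix.mul_assoc Mᵀ, hΛΨ, hΨΛ, two_smul]
  simp only [Matrix.mul_one, Matrix.one_mul]
  abel

theorem Matrix.posDef_transpose_mul_self_add_smul_one [Fintype m] (V : Matrix m ι ℝ) {ε : ℝ}
    (hε : 0 < ε) : (Vᵀ * V + ε • (1 : Matrix ι ι ℝ)).PosDef :=
  PosDef.posSemidef_add (posSemidef_conjTranspose_mul_self V) (PosDef.one.smul hε)

theorem direct_parameterization_lipschitz_general
    {n dI p : ℕ}
    (V : Matrix (Fin n) (Fin n) ℝ) (U : Matrix (Fin n) (Fin dI) ℝ)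
    (Wo : Matrix (Fin p) (Fin n) ℝ) (S : Matrix (Fin n) (Fin n) ℝ)
    (hS : S = -Sᵀ)
    (ψ : Fin n → ℝ) (hψ : ∀ i, 0 < ψ i)
    (Ψ : Matrix (Fin n) (Fin n) ℝ) (hΨ : Ψ = Matrix.diagonal ψ)
    (Λ : Matrix (Fin n) (Fin n) ℝ) (hΛ : Λ = Matrix.diagonal fun i => (ψ i)⁻¹)
    (γ ε : ℝ) (hε : 0 < ε)
    (W : Matrix (Fin n) (Fin n) ℝ)
    (hW : W = 1 - Ψ * ((1 / (2 * γ)) • (Woᵀ * Wo) +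
        (1 / (2 * γ)) • (Λ * U * Uᵀ * Λ) + Vᵀ * V +
        ε • (1 : Matrix (Fin n) (Fin n) ℝ) + S)) :
    ((2 : ℝ) • Λ - Λ * W - Wᵀ * Λ - (1 / γ) • (Woᵀ * Wo) -
      (1 / γ) • (Λ * U * Uᵀ * Λ)).PosDef := by
  have hΛΨ : Λ * Ψ = 1 := hΛ ▸ hΨ ▸ diagonal_inv_mul_diagonal fun i => (hψ i).ne'
  have hΨT : Ψᵀ = Ψ := hΨ ▸ diagonal_transpose ψ
  have hΛT : Λᵀ = Λ := hΛ ▸ diagonal_transpose _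
  have hST : Sᵀ = -S := neg_eq_iff_eq_neg.mp hS.symm
  rw [hW, two_smul_sub_mul_one_sub_mul_sub_transpose _ hΛΨ hΨT]
  convert (posDef_transpose_mul_self_add_smul_one V hε).smul (two_pos : (0 : ℝ) < 2) using 1
  simp only [transpose_add, transpose_smul, transpose_mul, transpose_transpose, transpose_one,
    hΛT, hST, Matrix.mul_assoc]
  match_scalars <;> ring

/-- Direct parameterization of the Lipschitz LMI: for any free `V`, `U`, `W_o`,
skew-symmetric `S`, positive diagonal `Ψ`, `γ > 0`, `ε > 0`, the matrix
`W = I - Ψ((1/(2γ))W_oᵀW_o + (1/(2γ))Ψ⁻¹UUᵀΨ⁻¹ + VᵀV + εI + S)` satisfies the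
Lipschitz LMI with `Λ = Ψ⁻¹`. -/
theorem direct_parameterization_lipschitz
    {n dI p : ℕ}
    (V : Matrix (Fin n) (Fin n) ℝ) (U : Matrix (Fin n) (Fin dI) ℝ)
    (Wo : Matrix (Fin p) (Fin n) ℝ) (S : Matrix (Fin n) (Fin n) ℝ)
    (hS : S = -Sᵀ)
    (ψ : Fin n → ℝ) (hψ : ∀ i, 0 < ψ i)
    (Ψ : Matrix (Fin n) (Fin n) ℝ) (hΨ : Ψ = Matrix.diagonal ψ)
    (Λ : Matrix (Fin n) (Fin n) ℝ) (hΛ : Λ = Matrix.diagonal fun i => (ψ i)⁻¹)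
    (γ ε : ℝ) (hγ : 0 < γ) (hε : 0 < ε)
    (W : Matrix (Fin n) (Fin n) ℝ)
    (hW : W = 1 - Ψ * ((1 / (2 * γ)) • (Woᵀ * Wo) +
        (1 / (2 * γ)) • (Λ * U * Uᵀ * Λ) + Vᵀ * V +
        ε • (1 : Matrix (Fin n) (Fin n) ℝ) + S)) :
    ((2 : ℝ) • Λ - Λ * W - Wᵀ * Λ - (1 / γ) • (Woᵀ * Wo) -
      (1 / γ) • (Λ * U * Uᵀ * Λ)).PosDef :=
  direct_parameterization_lipschitz_general V U Wo S hS ψ hψ Ψ hΨ Λ hΛ γ ε hε W hW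
end

section
/- Let σ: ℝ → ℝ be monotone and slope-restricted in [0,1]. Then there exists a proper convex function f: ℝ → ℝ ∪ {∞} such that σ(x) = argmin_u (1/2)(u-x)² + f(u) for all x ∈ ℝ. -/
/-!
Let `Φ` be a primitive of `σ`. The slope restriction says that `σ` and `x ↦ x - σ x` are monotone,
i.e. that `Φ` and `z ↦ z ^ 2 / 2 - Φ z` are convex. Take `f u = Φ* u - u ^ 2 / 2`, where `Φ*` is the
Fenchel conjugate of `Φ`; it is convex because `Φ` is `1`-smooth, so `Φ*` is `1`-strongly convex.
Moreover `(u - x) ^ 2 / 2 + f u = x ^ 2 / 2 - Φ x + sup_z ((z - x) * u - (Φ z - Φ x))`, and the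
supremum is nonnegative (take `z = x`) and vanishes exactly when `u` is a subgradient of `Φ` at
`x`, that is, when `u = Φ' x = σ x`.
-/

lemma monotone_of_slope_nonneg {g : ℝ → ℝ} (h : ∀ x y, x ≠ y → 0 ≤ (g x - g y) / (x - y)) :
    Monotone g := by
  intro a b hab
  rcases hab.eq_or_lt with rfl | hlt
  · rfl
  · have := h b a hlt.ne'
    rw [le_div_iff₀ (sub_pos.2 hlt), zero_mul] at this
    linarith

lemma lipschitzWith_one_of_monotone_of_monotone_id_sub {g : ℝ → ℝ} (hg : Monotone g)
    (hg' : Monotone fun x => x - g x) : LipschitzWith 1 g := by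
  refine LipschitzWith.of_le_add fun x y => ?_
  rw [Real.dist_eq]
  rcases le_total x y with hxy | hyx
  · linarith [hg hxy, abs_nonneg (x - y)]
  · linarith [hg' hyx, le_abs_self (x - y)]

lemma mul_sub_le_sub_of_hasDerivAt_of_monotone {g g' : ℝ → ℝ}
    (hg : ∀ x, HasDerivAt g (g' x) x) (hg' : Monotone g') (x z : ℝ) :
    g' x * (z - x) ≤ g z - g x := by
  have hcont : Continuous g := continuous_iff_continuousAt.2 fun x => (hg x).continuousAt
  rcases lt_trichotomy x z with hxz | rfl | hzx
  · obtain ⟨c, hc, hslope⟩ :=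
      exists_hasDerivAt_eq_slope g g' hxz hcont.continuousOn fun t _ => hg t
    rw [eq_div_iff (sub_pos.2 hxz).ne'] at hslope
    nlinarith [hg' hc.1.le]
  · simp
  · obtain ⟨c, hc, hslope⟩ :=
      exists_hasDerivAt_eq_slope g g' hzx hcont.continuousOn fun t _ => hg t
    rw [eq_div_iff (sub_pos.2 hzx).ne'] at hslope
    nlinarith [hg' hc.2.le]

lemma eq_of_hasDerivAt_of_forall_mul_sub_le {g : ℝ → ℝ} {d u x : ℝ} (hg : HasDerivAt g d x)
    (hu : ∀ z, u * (z - x) ≤ g z - g x) : u = d := by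
  have hmin : IsLocalMin (fun z => g z - u * z) x :=
    Filter.Eventually.of_forall fun z => by linarith [hu z]
  have := hmin.hasDerivAt_eq_zero (hg.sub ((hasDerivAt_id x).const_mul u))
  simp only [mul_one] at this
  linarith

lemma EReal.coe_mul_add_mul_le {s t a b : ℝ} {A B : EReal} (hs : 0 ≤ s) (ht : 0 ≤ t)
    (ha : (a : EReal) ≤ A) (hb : (b : EReal) ≤ B) :
    ((s * a + t * b : ℝ) : EReal) ≤ s * A + t * B := by
  rw [EReal.coe_add, EReal.coe_mul, EReal.coe_mul]
  gcongr

noncomputable def proxPotential (Φ : ℝ → ℝ) (u : ℝ) : EReal :=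
  ⨆ z : ℝ, ((z * u - u ^ 2 / 2 - Φ z : ℝ) : EReal)

namespace proxPotential

variable {Φ σ : ℝ → ℝ}

lemma coe_le (Φ : ℝ → ℝ) (u z : ℝ) :
    ((z * u - u ^ 2 / 2 - Φ z : ℝ) : EReal) ≤ proxPotential Φ u :=
  le_iSup (fun z : ℝ => ((z * u - u ^ 2 / 2 - Φ z : ℝ) : EReal)) z

lemma convex (hsmooth : ∀ z a, Φ (z + a) ≤ Φ z + σ z * a + a ^ 2 / 2) (x y t : ℝ)
    (ht₀ : 0 ≤ t) (ht₁ : t ≤ 1) :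
    proxPotential Φ (t * x + (1 - t) * y) ≤
      (t : EReal) * proxPotential Φ x + ((1 - t : ℝ) : EReal) * proxPotential Φ y := by
  refine iSup_le fun z => ?_
  -- `t * z₁ + (1 - t) * z₂ = z` and `z₁ - z₂ = x - y`
  set z₁ := z + (1 - t) * (x - y)
  set z₂ := z + -(t * (x - y))
  have h₁ := mul_le_mul_of_nonneg_left (hsmooth z ((1 - t) * (x - y))) ht₀
  have h₂ := mul_le_mul_of_nonneg_left (hsmooth z (-(t * (x - y)))) (sub_nonneg.2 ht₁)
  calc ((z * (t * x + (1 - t) * y) - (t * x + (1 - t) * y) ^ 2 / 2 - Φ z : ℝ) : EReal)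
      ≤ ((t * (z₁ * x - x ^ 2 / 2 - Φ z₁) + (1 - t) * (z₂ * y - y ^ 2 / 2 - Φ z₂) : ℝ) : EReal) :=
        EReal.coe_le_coe_iff.2 (by linear_combination h₁ + h₂)
    _ ≤ _ := EReal.coe_mul_add_mul_le ht₀ (sub_nonneg.2 ht₁) (coe_le Φ x z₁) (coe_le Φ y z₂)

lemma apply_deriv (htangent : ∀ x z, σ x * (z - x) ≤ Φ z - Φ x) (x : ℝ) :
    proxPotential Φ (σ x) = ((x * σ x - σ x ^ 2 / 2 - Φ x : ℝ) : EReal) :=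
  le_antisymm
    (iSup_le fun z => EReal.coe_le_coe_iff.2 (by linarith [htangent x z]))
    (coe_le Φ (σ x) x)

lemma coe_le_halfSq_add (Φ : ℝ → ℝ) (x u z : ℝ) :
    ((x ^ 2 / 2 + (z - x) * u - Φ z : ℝ) : EReal) ≤
      (((1 / 2) * (u - x) ^ 2 : ℝ) : EReal) + proxPotential Φ u := by
  calc ((x ^ 2 / 2 + (z - x) * u - Φ z : ℝ) : EReal)
      = (((1 / 2) * (u - x) ^ 2 : ℝ) : EReal) + ((z * u - u ^ 2 / 2 - Φ z : ℝ) : EReal) := by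
        rw [← EReal.coe_add]; ring_nf
    _ ≤ _ := add_le_add le_rfl (coe_le Φ u z)

lemma halfSq_add_apply_deriv (htangent : ∀ x z, σ x * (z - x) ≤ Φ z - Φ x) (x : ℝ) :
    (((1 / 2) * (σ x - x) ^ 2 : ℝ) : EReal) + proxPotential Φ (σ x) =
      ((x ^ 2 / 2 - Φ x : ℝ) : EReal) := by
  rw [apply_deriv htangent, ← EReal.coe_add]; ring_nf

end proxPotential

open proxPotential in
/-- Proposition 1 (converse direction): every monotone, slope-restricted
activation `σ` is the proximal operator of some proper convex function
`f : ℝ → ℝ ∪ {∞}`: for each `x`, `σ x` is the unique minimizer of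
`u ↦ (1/2)(u - x)² + f(u)`. -/
theorem slope_restricted_is_prox
    (σ : ℝ → ℝ)
    (hσ : ∀ x y : ℝ, x ≠ y →
      0 ≤ (σ x - σ y) / (x - y) ∧ (σ x - σ y) / (x - y) ≤ 1) :
    ∃ f : ℝ → EReal,
      (∃ x : ℝ, f x ≠ ⊤) ∧
      (∀ x y t : ℝ, 0 ≤ t → t ≤ 1 →
        f (t * x + (1 - t) * y) ≤ (t : EReal) * f x + ((1 - t : ℝ) : EReal) * f y) ∧
      (∀ x : ℝ,
        (∀ u : ℝ, (((1 / 2) * (σ x - x) ^ 2 : ℝ) : EReal) + f (σ x) ≤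
          (((1 / 2) * (u - x) ^ 2 : ℝ) : EReal) + f u) ∧
        (∀ u : ℝ, ((((1 / 2) * (u - x) ^ 2 : ℝ) : EReal) + f u ≤
          (((1 / 2) * (σ x - x) ^ 2 : ℝ) : EReal) + f (σ x)) → u = σ x)) := by
  have hmono : Monotone σ := monotone_of_slope_nonneg fun x y hxy => (hσ x y hxy).1
  have hmono' : Monotone fun x => x - σ x := monotone_of_slope_nonneg fun x y hxy => by
    rw [show (x - σ x - (y - σ y)) / (x - y) = 1 - (σ x - σ y) / (x - y) by
      field_simp [sub_ne_zero.2 hxy]; ring]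
    linarith [(hσ x y hxy).2]
  set Φ : ℝ → ℝ := fun x => ∫ t in (0 : ℝ)..x, σ t
  have hcont : Continuous σ :=
    (lipschitzWith_one_of_monotone_of_monotone_id_sub hmono hmono').continuous
  have hΦ (x : ℝ) : HasDerivAt Φ (σ x) x := (hcont.integral_hasStrictDerivAt 0 x).hasDerivAt
  have tangent := mul_sub_le_sub_of_hasDerivAt_of_monotone hΦ hmono
  -- `1`-smoothness of `Φ`: tangent inequality for the convex function `z ↦ z ^ 2 / 2 - Φ z`
  have smooth (z a : ℝ) : Φ (z + a) ≤ Φ z + σ z * a + a ^ 2 / 2 := by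
    have hΨ (x : ℝ) : HasDerivAt (fun x => x ^ 2 / 2 - Φ x) (x - σ x) x := by
      simpa using ((hasDerivAt_pow 2 x).div_const 2).fun_sub (hΦ x)
    have := mul_sub_le_sub_of_hasDerivAt_of_monotone hΨ hmono' z (z + a)
    linarith
  refine ⟨proxPotential Φ, ⟨σ 0, by rw [apply_deriv tangent]; exact EReal.coe_ne_top _⟩,
    convex smooth, fun x => ⟨fun u => ?_, fun u hu => ?_⟩⟩
  · rw [halfSq_add_apply_deriv tangent]
    simpa using coe_le_halfSq_add Φ x u x
  · rw [halfSq_add_apply_deriv tangent] at hu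
    refine eq_of_hasDerivAt_of_forall_mul_sub_le (hΦ x) fun z => ?_
    have := EReal.coe_le_coe_iff.1 ((coe_le_halfSq_add Φ x u z).trans hu)
    linarith
end

section
/- The leaky ReLU σ(x) = max(x, 0.01x) is the proximal operator of f(z) = (99/2)·min(z,0)²: for every x ∈ ℝ, max(x, 0.01x) is the unique minimizer over z ∈ ℝ of (1/2)(z-x)² + (99/2)·min(z,0)². -/
/-!
The objective `g z = (z - x)² / 2 + c · min(z, 0)² / 2` is `1`-strongly convex, and
`p = max x (x / (1 + c))` satisfies the first-order condition `p - x + c · min(p, 0) = 0`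
(`min(z, 0)` is the derivative of `min(z, 0)² / 2`). Hence `g z ≥ g p + (z - p)² / 2`,
which gives both minimality and uniqueness; for `c = 99` the slope `1 / (1 + c)` is `0.01`.
-/

noncomputable def proxObjective (c x z : ℝ) : ℝ :=
  1 / 2 * (z - x) ^ 2 + c / 2 * (min z 0) ^ 2

lemma sq_min_zero_div_two_add_le (p z : ℝ) :
    (min p 0) ^ 2 / 2 + min p 0 * (z - p) ≤ (min z 0) ^ 2 / 2 := by
  rcases le_total p 0 with hp | hp <;> rcases le_total z 0 with hz | hz <;>
    simp only [min_eq_left, min_eq_right, hp, hz] <;> nlinarith [sq_nonneg (z - p)]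

lemma sub_add_mul_min_max_div_eq_zero {c : ℝ} (hc : 0 ≤ c) (x : ℝ) :
    max x (x / (1 + c)) - x + c * min (max x (x / (1 + c))) 0 = 0 := by
  rcases le_total 0 x with hx | hx
  · have hle : x / (1 + c) ≤ x := div_le_self hx (by linarith)
    rw [max_eq_left hle, min_eq_right hx]
    ring
  · have hle : x ≤ x / (1 + c) := by
      rw [le_div_iff₀ (by linarith)]
      nlinarith
    have hnonpos : x / (1 + c) ≤ 0 := div_nonpos_of_nonpos_of_nonneg hx (by linarith)
    rw [max_eq_right hle, min_eq_left hnonpos]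
    field_simp
    ring

lemma proxObjective_add_half_sq_le {c : ℝ} (hc : 0 ≤ c) (x z : ℝ) :
    proxObjective c x (max x (x / (1 + c))) + 1 / 2 * (z - max x (x / (1 + c))) ^ 2 ≤
      proxObjective c x z := by
  set p := max x (x / (1 + c))
  have hopt : p - x + c * min p 0 = 0 := sub_add_mul_min_max_div_eq_zero hc x
  have htangent := mul_le_mul_of_nonneg_left (sq_min_zero_div_two_add_le p z) hc
  unfold proxObjective
  linear_combination (p - z) * hopt + htangent

/-- Leaky ReLU is the proximal operator of `f(z) = (99/2) min(z,0)²`: for every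
`x`, `max x (0.01 x)` is the unique minimizer of
`z ↦ (1/2)(z - x)² + (99/2) min(z,0)²`. -/
theorem leaky_relu_is_prox (x : ℝ) :
    (∀ z : ℝ,
      (1 / 2) * (max x (0.01 * x) - x) ^ 2 + (99 / 2) * (min (max x (0.01 * x)) 0) ^ 2 ≤
        (1 / 2) * (z - x) ^ 2 + (99 / 2) * (min z 0) ^ 2) ∧
    (∀ z : ℝ,
      (1 / 2) * (z - x) ^ 2 + (99 / 2) * (min z 0) ^ 2 ≤
        (1 / 2) * (max x (0.01 * x) - x) ^ 2 + (99 / 2) * (min (max x (0.01 * x)) 0) ^ 2 →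
      z = max x (0.01 * x)) := by
  have hslope : 0.01 * x = x / (1 + 99) := by ring
  have key := proxObjective_add_half_sq_le (c := 99) (by norm_num) x
  simp only [proxObjective, ← hslope] at key
  refine ⟨fun z => ?_, fun z hz => ?_⟩
  · linarith [key z, sq_nonneg (z - max x (0.01 * x))]
  · have hsq : (z - max x (0.01 * x)) ^ 2 ≤ 0 := by linarith [key z]
    exact sub_eq_zero.mp ((sq_nonpos_iff _).mp hsq)
end

section
/- Invertibility of I - JW: let Λ be positive diagonal and W satisfy 2Λ - ΛW - WᵀΛ ≻ 0. Then for every diagonal matrix J with diagonal entries in [0,1], the matrix I - JW is invertible. -/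
/-!
If `(1 - diagonal j * W) v = 0`, write `y = W v`, so `v = j • y` coordinatewise. The quadratic
form of `2Λ - ΛW - WᵀΛ` at `v` is `2 ∑ dᵢ vᵢ (vᵢ - yᵢ) = 2 ∑ dᵢ jᵢ (jᵢ - 1) yᵢ²`, which is `≤ 0`
because `dᵢ > 0` and `jᵢ ∈ [0,1]`; positive definiteness then forces `v = 0`.
-/

open Matrix

theorem dotProduct_two_smul_diagonal_sub_mulVec {ι R : Type*} [Fintype ι] [DecidableEq ι]
    [CommRing R] (W : Matrix ι ι R) (d v : ι → R) :
    v ⬝ᵥ ((2 : R) • diagonal d - diagonal d * W - Wᵀ * diagonal d) *ᵥ v =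
      2 * ∑ i, d i * v i * (v i - (W *ᵥ v) i) := by
  rw [sub_mulVec, sub_mulVec, dotProduct_sub, dotProduct_sub, ← mulVec_mulVec,
    ← mulVec_mulVec, dotProduct_mulVec v Wᵀ, vecMul_transpose, smul_mulVec, dotProduct_smul]
  simp only [dotProduct, mulVec_diagonal, Finset.mul_sum, ← Finset.sum_sub_distrib, smul_eq_mul]
  exact Finset.sum_congr rfl fun i _ => by ring

theorem mul_mul_sub_nonpos_of_nonneg_of_le_one {R : Type*} [CommRing R] [LinearOrder R]
    [IsStrictOrderedRing R] {t : R} (ht₀ : 0 ≤ t) (ht₁ : t ≤ 1) (y : R) :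
    t * y * (t * y - y) ≤ 0 := by
  have hfactor : t * y * (t * y - y) = t * (t - 1) * (y * y) := by ring
  rw [hfactor]
  exact mul_nonpos_of_nonpos_of_nonneg
    (mul_nonpos_of_nonneg_of_nonpos ht₀ (sub_nonpos.2 ht₁)) (mul_self_nonneg y)

/-- Proposition 3: if `2Λ - ΛW - WᵀΛ ≻ 0` for a positive diagonal `Λ`, then
`I - JW` is invertible for every diagonal `J` with entries in `[0,1]`. -/
theorem I_sub_JW_invertible
    {n : ℕ} (W : Matrix (Fin n) (Fin n) ℝ)
    (d : Fin n → ℝ) (hd : ∀ i, 0 < d i)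
    (hW : ((2 : ℝ) • Matrix.diagonal d - Matrix.diagonal d * W -
        Wᵀ * Matrix.diagonal d).PosDef)
    (j : Fin n → ℝ) (hj : ∀ i, 0 ≤ j i ∧ j i ≤ 1) :
    IsUnit (1 - Matrix.diagonal j * W) := by
  rw [isUnit_iff_isUnit_det, isUnit_iff_ne_zero]
  intro hdet
  obtain ⟨v, hv₀, hv⟩ := exists_mulVec_eq_zero_iff.2 hdet
  have hfix : ∀ i, v i = j i * (W *ᵥ v) i := fun i => by
    simpa [sub_mulVec, ← mulVec_mulVec, mulVec_diagonal, sub_eq_zero] using congrFun hv i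
  have hpos := hW.dotProduct_mulVec_pos hv₀
  rw [star_trivial, dotProduct_two_smul_diagonal_sub_mulVec] at hpos
  have hnonpos : ∑ i, d i * v i * (v i - (W *ᵥ v) i) ≤ 0 := Finset.sum_nonpos fun i _ => by
    rw [mul_assoc, hfix i]
    exact mul_nonpos_of_nonneg_of_nonpos (hd i).le
      (mul_mul_sub_nonpos_of_nonneg_of_le_one (hj i).1 (hj i).2 _)
  linarith
end

section
/- For the 2×2 matrix W with rows (0, W₁₂) and (0, W₂₂): there exists a positive diagonal Λ such that 2Λ - ΛW - WᵀΛ ≻ 0 if and only if W₂₂ < 1. -/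
/-!
For `Λ = diag(λ₁, λ₂)` the matrix `2Λ - ΛW - WᵀΛ` equals
`[[2λ₁, -λ₁W₁₂], [-λ₁W₁₂, 2λ₂(1 - W₂₂)]]`. By Sylvester's criterion it is positive definite
iff `λ₁²W₁₂² < 4λ₁λ₂(1 - W₂₂)`, which forces `W₂₂ < 1`; conversely, if `W₂₂ < 1` it holds for
`λ₁ = 1` and `λ₂` large enough.
-/

open Matrix

lemma Matrix.star_dotProduct_mulVec_fin_two {R : Type*} [CommRing R] [StarRing R] [TrivialStar R]
    (a b c : R) (x : Fin 2 → R) :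
    star x ⬝ᵥ (!![a, b; b, c] *ᵥ x) = a * x 0 ^ 2 + 2 * b * x 0 * x 1 + c * x 1 ^ 2 := by
  simp only [star_trivial, dotProduct, mulVec, Fin.sum_univ_two, of_apply, cons_val',
    cons_val_zero, cons_val_one, empty_val', cons_val_fin_one]
  ring

section PosDefFinTwo

variable {K : Type*} [Field K] [LinearOrder K] [IsStrictOrderedRing K] [StarRing K] [TrivialStar K]

theorem Matrix.posDef_fin_two_iff {a b c : K} :
    !![a, b; b, c].PosDef ↔ 0 < a ∧ b ^ 2 < a * c := by
  have hHerm : !![a, b; b, c].IsHermitian := by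
    ext i j; fin_cases i <;> fin_cases j <;> simp
  rw [posDef_iff_dotProduct_mulVec]
  simp only [hHerm, true_and, star_dotProduct_mulVec_fin_two]
  constructor
  · intro h
    have ha : 0 < a := by simpa using @h ![1, 0] (by simp)
    -- the value at `(b, -a)` is `a (a c - b²)`
    have hdet := @h ![b, -a] (by simp [ha.ne'])
    simp only [cons_val_zero, cons_val_one] at hdet
    exact ⟨ha, by nlinarith⟩
  · rintro ⟨ha, hdet⟩ x hx
    -- completing the square: `a Q(x) = (a x₀ + b x₁)² + (a c - b²) x₁²`
    have hsq : a * (a * x 0 ^ 2 + 2 * b * x 0 * x 1 + c * x 1 ^ 2) =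
        (a * x 0 + b * x 1) ^ 2 + (a * c - b ^ 2) * x 1 ^ 2 := by ring
    refine pos_of_mul_pos_right (hsq ▸ ?_) ha.le
    rcases eq_or_ne (x 1) 0 with h1 | h1
    · have h0 : x 0 ≠ 0 := fun h0 => hx (by ext i; fin_cases i <;> simp [h0, h1])
      simpa [h1] using sq_pos_of_ne_zero (mul_ne_zero ha.ne' h0)
    · have := sq_pos_of_ne_zero h1
      nlinarith [sq_nonneg (a * x 0 + b * x 1)]

end PosDefFinTwo

lemma two_smul_diagonal_sub_mul_sub_transpose_mul {R : Type*} [CommRing R] (d : Fin 2 → R)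
    (W₁₂ W₂₂ : R) :
    (2 : R) • diagonal d - diagonal d * !![0, W₁₂; 0, W₂₂] - (!![0, W₁₂; 0, W₂₂])ᵀ * diagonal d =
      !![2 * d 0, -(d 0 * W₁₂); -(d 0 * W₁₂), 2 * d 1 * (1 - W₂₂)] := by
  ext i j
  fin_cases i <;> fin_cases j <;> simp [mul_apply, diagonal_apply] <;> ring

/-- Example: for `W = [[0, W₁₂], [0, W₂₂]]`, there exists a positive diagonal
`Λ` with `2Λ - ΛW - WᵀΛ ≻ 0` if and only if `W₂₂ < 1`. -/
theorem two_by_two_wellposed_iff (W₁₂ W₂₂ : ℝ) :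
    (∃ d : Fin 2 → ℝ, (∀ i, 0 < d i) ∧
      ((2 : ℝ) • Matrix.diagonal d - Matrix.diagonal d * !![0, W₁₂; 0, W₂₂] -
        (!![0, W₁₂; 0, W₂₂])ᵀ * Matrix.diagonal d).PosDef) ↔ W₂₂ < 1 := by
  simp only [two_smul_diagonal_sub_mul_sub_transpose_mul, posDef_fin_two_iff, Fin.forall_fin_two]
  constructor
  · rintro ⟨d, ⟨hd₀, hd₁⟩, -, hdet⟩
    have hprod : 0 < 4 * (d 0 * d 1) * (1 - W₂₂) := by nlinarith [sq_nonneg (d 0 * W₁₂)]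
    exact sub_pos.mp (pos_of_mul_pos_right hprod (by positivity))
  · intro hW
    have hW' : 0 < 1 - W₂₂ := sub_pos.mpr hW
    refine ⟨![1, (W₁₂ ^ 2 + 1) / (4 * (1 - W₂₂))], ?_⟩
    simp only [cons_val_zero, cons_val_one, one_mul, mul_one, neg_sq]
    refine ⟨⟨one_pos, by positivity⟩, two_pos, ?_⟩
    have hcorner : 2 * (2 * ((W₁₂ ^ 2 + 1) / (4 * (1 - W₂₂))) * (1 - W₂₂)) = W₁₂ ^ 2 + 1 := by
      field_simp; ring
    linarith
end

section
/- Contraction of the neural ODE metric inequality: suppose P = Pᵀ ≻ 0 and there exists a positive diagonal matrix Λ such that the block matrix [[-2P, PW + Λ], [WᵀP + Λ, -2Λ]] ≺ 0. Then for any diagonal matrix Φ with entries in [0,1], the matrix A = -I + WΦ satisfies PA + AᵀP ≺ 0. -/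
open Matrix

/-- Contraction metric inequality for the neural ODE: if the block LMI
`[[-2P, PW + Λ], [WᵀP + Λ, -2Λ]] ≺ 0` holds with `P = Pᵀ ≻ 0` and `Λ`
positive diagonal, then for every diagonal `Φ` with entries in `[0,1]`,
`A = -I + WΦ` satisfies `PA + AᵀP ≺ 0`. -/
theorem neural_ode_contraction_lmi
    {n : ℕ} (W P : Matrix (Fin n) (Fin n) ℝ)
    (d : Fin n → ℝ) (hd : ∀ i, 0 < d i)
    (Λ : Matrix (Fin n) (Fin n) ℝ) (hΛ : Λ = Matrix.diagonal d)
    (hP : P.PosDef)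
    (hLMI : ∃ ε : ℝ, 0 < ε ∧
      (-(Matrix.fromBlocks ((-2 : ℝ) • P) (P * W + Λ)
          (Wᵀ * P + Λ) ((-2 : ℝ) • Λ))).PosDef)
    (φ : Fin n → ℝ) (hφ : ∀ i, 0 ≤ φ i ∧ φ i ≤ 1) :
    (-(P * (-1 + W * Matrix.diagonal φ) +
        (-1 + W * Matrix.diagonal φ)ᵀ * P)).PosDef := by
  obtain ⟨ε, hε, hM⟩ := hLMI
  have hPsymm : Pᵀ = P := hP.1
  rw [posDef_iff_dotProduct_mulVec]
  constructor
  · show _ᴴ = _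
    rw [show ∀ M : Matrix (Fin n) (Fin n) ℝ, Mᴴ = Mᵀ from fun _ => rfl]
    simp only [transpose_neg, transpose_add, transpose_mul, transpose_transpose, hPsymm]
    rw [add_comm]
  · intro x hx
    set Φ := Matrix.diagonal φ with hΦ
    set y : Fin n → ℝ := fun i => φ i * x i with hy
    have hyΦ : Φ *ᵥ x = y := by
      ext i; simp [hΦ, hy, mulVec_diagonal]
    have hz : (x ⊕ᵥ y) ≠ 0 := by
      intro h
      apply hx
      ext i
      have := congrFun h (Sum.inl i)
      simpa using this
    have hkey := (posDef_iff_dotProduct_mulVec.mp hM).2 hz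
    -- expand the block quadratic form
    have hexp : star (x ⊕ᵥ y) ⬝ᵥ
        (-(Matrix.fromBlocks ((-2 : ℝ) • P) (P * W + Λ)
          (Wᵀ * P + Λ) ((-2 : ℝ) • Λ))) *ᵥ (x ⊕ᵥ y)
        = -((-2) * (x ⬝ᵥ P *ᵥ x) + x ⬝ᵥ (P * W) *ᵥ y + x ⬝ᵥ Λ *ᵥ y
            + y ⬝ᵥ (Wᵀ * P) *ᵥ x + y ⬝ᵥ Λ *ᵥ x + (-2) * (y ⬝ᵥ Λ *ᵥ y)) := by
      rw [show star (x ⊕ᵥ y) = x ⊕ᵥ y from rfl]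
      rw [neg_mulVec, dotProduct_neg, fromBlocks_mulVec]
      simp only [Sum.elim_comp_inl, Sum.elim_comp_inr]
      rw [sumElim_dotProduct_sumElim]
      simp only [add_mulVec, smul_mulVec, dotProduct_add, dotProduct_smul]
      ring_nf
    rw [hexp] at hkey
    -- the slack term is nonneg
    have hslack : 0 ≤ x ⬝ᵥ Λ *ᵥ y + y ⬝ᵥ Λ *ᵥ x - 2 * (y ⬝ᵥ Λ *ᵥ y) := by
      have : x ⬝ᵥ Λ *ᵥ y + y ⬝ᵥ Λ *ᵥ x - 2 * (y ⬝ᵥ Λ *ᵥ y)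
          = ∑ i, 2 * (d i * (φ i * (1 - φ i) * (x i)^2)) := by
        subst hΛ
        simp only [dotProduct, mulVec_diagonal, hy, Finset.mul_sum,
          ← Finset.sum_add_distrib, ← Finset.sum_sub_distrib]
        apply Finset.sum_congr rfl
        intro i _
        ring
      rw [this]
      apply Finset.sum_nonneg
      intro i _
      have h1 := (hφ i).1
      have h2 : (0:ℝ) ≤ 1 - φ i := by linarith [(hφ i).2]
      have h3 := (hd i).le
      positivity
    -- expand target quadratic form
    have htgt : star x ⬝ᵥ (-(P * (-1 + W * Φ) + (-1 + W * Φ)ᵀ * P)) *ᵥ x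
        = 2 * (x ⬝ᵥ P *ᵥ x) - x ⬝ᵥ (P * W) *ᵥ y - y ⬝ᵥ (Wᵀ * P) *ᵥ x := by
      rw [show star x = x from rfl]
      have hΦt : Φᵀ = Φ := diagonal_transpose φ
      rw [neg_mulVec, dotProduct_neg]
      rw [show (-1 + W * Φ)ᵀ = -1 + Φᵀ * Wᵀ by simp [transpose_add, transpose_mul]]
      rw [hΦt]
      simp only [add_mul, mul_add, add_mulVec, neg_mulVec, dotProduct_add,
        dotProduct_neg, Matrix.mul_assoc]
      rw [show P * (-1 : Matrix (Fin n) (Fin n) ℝ) = -P by simp,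
        show (-1 : Matrix (Fin n) (Fin n) ℝ) * P = -P by simp]
      have h1 : (P * (W * Φ)) *ᵥ x = (P * W) *ᵥ y := by
        rw [← hyΦ, mulVec_mulVec, Matrix.mul_assoc]
      have h2 : x ⬝ᵥ ((Φ * (Wᵀ * P)) *ᵥ x) = y ⬝ᵥ (Wᵀ * P) *ᵥ x := by
        rw [← mulVec_mulVec, ← hyΦ]
        rw [dotProduct_mulVec x Φ, show x ᵥ* Φ = Φᵀ *ᵥ x from (mulVec_transpose Φ x).symm, hΦt]
      rw [h1, h2]
      have h3 : x ⬝ᵥ (-P) *ᵥ x = -(x ⬝ᵥ P *ᵥ x) := by rw [neg_mulVec, dotProduct_neg]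
      rw [h3]
      ring
    rw [htgt]
    linarith [hkey, hslack]
end
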